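/- The operators $R = \langle \underline{y},\underline{\partial}_x\rangle + \frac{1}{2}|\underline{z}|^2$ and $L = \langle \underline{x},\underline{\partial}_y\rangle - \frac{1}{2}\Delta_z$ both commute with the symplectic Dirac operator $D_s = \langle \underline{z},\underline{\partial}_y\rangle - \langle \underline{\partial}_x,\underline{\partial}_z\rangle$ and with its dual $D_s^\dagger = \langle \underline{y},\underline{\partial}_z\rangle + \langle \underline{x},\underline{z}\rangle$, i.e. $[R,D_s] = [L,D_s] = [R,D_s^\dagger] = [L,D_s^\dagger] = 0$ as operators on polynomials in $(\underline{x},\underline{y},\underline{z}) \in \mathbb{R}^{3m}$. -/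
import Mathlib


open MvPolynomial

noncomputable section

/-- Polynomials in 3m variables x_1..x_m, y_1..y_m, z_1..z_m over ℂ. -/
abbrev Pol (m : ℕ) := MvPolynomial (Fin m ⊕ Fin m ⊕ Fin m) ℂ

variable (m : ℕ)

def xV (j : Fin m) : Pol m := X (Sum.inl j)
def yV (j : Fin m) : Pol m := X (Sum.inr (Sum.inl j))
def zV (j : Fin m) : Pol m := X (Sum.inr (Sum.inr j))

def dx (j : Fin m) : Module.End ℂ (Pol m) := (pderiv (Sum.inl j)).toLinearMap
def dy (j : Fin m) : Module.End ℂ (Pol m) := (pderiv (Sum.inr (Sum.inl j))).toLinearMap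
def dz (j : Fin m) : Module.End ℂ (Pol m) := (pderiv (Sum.inr (Sum.inr j))).toLinearMap

/-- Multiplication by a fixed polynomial, as a linear operator. -/
def mulP (p : Pol m) : Module.End ℂ (Pol m) := LinearMap.mulLeft ℂ p

/-- Euler operator in x. -/
def Ex : Module.End ℂ (Pol m) := ∑ j, mulP m (xV m j) * dx m j
def Ey : Module.End ℂ (Pol m) := ∑ j, mulP m (yV m j) * dy m j
def Ez : Module.End ℂ (Pol m) := ∑ j, mulP m (zV m j) * dz m j

/-- Laplacian in z. -/
def lapZ : Module.End ℂ (Pol m) := ∑ j, dz m j * dz m j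
def lapX : Module.End ℂ (Pol m) := ∑ j, dx m j * dx m j
/-- |z|² as multiplication operator. -/
def nzsq : Module.End ℂ (Pol m) := ∑ j, mulP m (zV m j * zV m j)

/-- Symplectic Dirac operator D_s = ⟨z,∂_y⟩ - ⟨∂_x,∂_z⟩. -/
def Ds : Module.End ℂ (Pol m) :=
  (∑ j, mulP m (zV m j) * dy m j) - ∑ j, dx m j * dz m j

/-- Dual symplectic Dirac operator D_s† = ⟨y,∂_z⟩ + ⟨x,z⟩. -/
def DsD : Module.End ℂ (Pol m) :=
  (∑ j, mulP m (yV m j) * dz m j) + ∑ j, mulP m (xV m j * zV m j)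

/-- L = ⟨x,∂_y⟩ - ½Δ_z. -/
def Lop : Module.End ℂ (Pol m) :=
  (∑ j, mulP m (xV m j) * dy m j) - ((1:ℂ)/2) • lapZ m

/-- R = ⟨y,∂_x⟩ + ½|z|². -/
def Rop : Module.End ℂ (Pol m) :=
  (∑ j, mulP m (yV m j) * dx m j) + ((1:ℂ)/2) • nzsq m

/-- ℰ = 𝔼_y - 𝔼_x + 𝔼_z + m/2. -/
def Eop : Module.End ℂ (Pol m) :=
  Ey m - Ex m + Ez m + ((m : ℂ)/2) • (1 : Module.End ℂ (Pol m))

namespace SDAux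

section Generic
variable {A : Type*} [Ring A] (a b c d e P : A)

lemma g1 (h1 : b*c = c*b) (h2 : b*d = d*b) (h3 : a*c = c*a) (h4 : d*a = a*d + e) :
    (a*b)*(c*d) - (c*d)*(a*b) = -(c*e*b) := by
  calc (a*b)*(c*d) - (c*d)*(a*b)
      = a*(b*c)*d - c*(d*a)*b := by noncomm_ring
    _ = a*(c*b)*d - c*(a*d+e)*b := by rw [h1, h4]
    _ = (a*c)*(b*d) - ((c*a)*(d*b) + c*e*b) := by noncomm_ring
    _ = (c*a)*(d*b) - ((c*a)*(d*b) + c*e*b) := by rw [h2, h3]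
    _ = -(c*e*b) := by noncomm_ring

lemma g2 (h1 : c*P = P*c) (h2 : d*P = P*d + e) :
    P*(c*d) - (c*d)*P = -(c*e) := by
  calc P*(c*d) - (c*d)*P
      = P*(c*d) - c*(d*P) := by noncomm_ring
    _ = P*(c*d) - c*(P*d+e) := by rw [h2]
    _ = P*(c*d) - ((c*P)*d + c*e) := by noncomm_ring
    _ = P*(c*d) - ((P*c)*d + c*e) := by rw [h1]
    _ = -(c*e) := by noncomm_ring

lemma g3 (h1 : b*c = c*b) (h2 : b*d = d*b) (h3 : d*a = a*d) (h4 : c*a = a*c + e) :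
    (a*b)*(c*d) - (c*d)*(a*b) = -(e*(d*b)) := by
  calc (a*b)*(c*d) - (c*d)*(a*b)
      = a*(b*c)*d - c*(d*a)*b := by noncomm_ring
    _ = a*(c*b)*d - c*(a*d)*b := by rw [h1, h3]
    _ = (a*c)*(d*b) - (c*a)*(d*b) := by rw [show a*(c*b)*d = (a*c)*(b*d) by noncomm_ring, h2]; noncomm_ring
    _ = (a*c)*(d*b) - (a*c+e)*(d*b) := by rw [h4]
    _ = -(e*(d*b)) := by noncomm_ring

lemma g4 (h1 : a*d = d*a) (h2 : a*c = c*a + e) (h3 : a*e = e*a) :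
    (a*a)*(c*d) - (c*d)*(a*a) = e*(a*d) + e*(a*d) := by
  have e1 : (a*a)*(c*d) = c*(a*(a*d)) + (e*(a*d) + e*(a*d)) := by
    calc (a*a)*(c*d) = a*((a*c)*d) := by noncomm_ring
      _ = a*((c*a+e)*d) := by rw [h2]
      _ = (a*c)*(a*d) + (a*e)*d := by noncomm_ring
      _ = (c*a+e)*(a*d) + (e*a)*d := by rw [h2, h3]
      _ = c*(a*(a*d)) + (e*(a*d) + e*(a*d)) := by noncomm_ring
  have e2 : (c*d)*(a*a) = c*(a*(a*d)) := by
    calc (c*d)*(a*a) = c*((d*a)*a) := by noncomm_ring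
      _ = c*((a*d)*a) := by rw [← h1]
      _ = c*(a*(d*a)) := by noncomm_ring
      _ = c*(a*(a*d)) := by rw [← h1]
  rw [e1, e2]; noncomm_ring

lemma g5 (h1 : a*P = P*a) (h2 : b*P = P*b + e) :
    (a*b)*P - P*(a*b) = a*e := by
  calc (a*b)*P - P*(a*b)
      = a*(b*P) - P*(a*b) := by noncomm_ring
    _ = a*(P*b+e) - P*(a*b) := by rw [h2]
    _ = (a*P)*b + a*e - P*(a*b) := by noncomm_ring
    _ = (P*a)*b + a*e - P*(a*b) := by rw [h1]
    _ = a*e := by noncomm_ring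

lemma g6 (h1 : a*c = c*a) (h2 : a*d = d*a) (h3 : b*d = d*b) (h4 : b*c = c*b + e) :
    (a*b)*(c*d) - (c*d)*(a*b) = a*e*d := by
  calc (a*b)*(c*d) - (c*d)*(a*b)
      = a*(b*c)*d - c*(d*a)*b := by noncomm_ring
    _ = a*(c*b+e)*d - c*(a*d)*b := by rw [h4, h2]
    _ = (a*c)*(b*d) + a*e*d - (c*a)*(d*b) := by noncomm_ring
    _ = (c*a)*(d*b) + a*e*d - (c*a)*(d*b) := by rw [h1, h3]
    _ = a*e*d := by noncomm_ring

lemma g7 (h2 : a*P = P*a + e) (h3 : a*e = e*a) :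
    (a*a)*P - P*(a*a) = e*a + e*a := by
  calc (a*a)*P - P*(a*a)
      = a*(a*P) - P*(a*a) := by noncomm_ring
    _ = a*(P*a+e) - P*(a*a) := by rw [h2]
    _ = (a*P)*a + a*e - P*(a*a) := by noncomm_ring
    _ = (P*a+e)*a + e*a - P*(a*a) := by rw [h2, h3]
    _ = e*a + e*a := by noncomm_ring

lemma sum_comm_sub {m : ℕ} (F G : Fin m → A) :
    (∑ j, F j) * (∑ k, G k) - (∑ k, G k) * (∑ j, F j)
      = ∑ j, ∑ k, (F j * G k - G k * F j) := by
  rw [Finset.sum_mul_sum, Finset.sum_mul_sum]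
  rw [Finset.sum_comm (s := (Finset.univ : Finset (Fin m)))
      (t := (Finset.univ : Finset (Fin m))) (f := fun k j => G k * F j)]
  rw [← Finset.sum_sub_distrib]
  exact Finset.sum_congr rfl fun j _ => by rw [← Finset.sum_sub_distrib]

end Generic

end SDAux

namespace SDAux

variable {m : ℕ}

lemma mulP_one : mulP m 1 = 1 := by
  refine LinearMap.ext fun p => ?_; simp [mulP]

lemma mulP_zero : mulP m 0 = 0 := by
  refine LinearMap.ext fun p => ?_; simp [mulP]

lemma mulP_add (p q : Pol m) : mulP m (p + q) = mulP m p + mulP m q := by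
  refine LinearMap.ext fun r => ?_; simp [mulP, add_mul]

lemma mulP_mul (p q : Pol m) : mulP m (p * q) = mulP m p * mulP m q := by
  refine LinearMap.ext fun r => ?_; simp [mulP, mul_assoc]

lemma mulP_comm (p q : Pol m) : mulP m p * mulP m q = mulP m q * mulP m p := by
  rw [← mulP_mul, ← mulP_mul, mul_comm]

lemma pderiv_pderiv_comm (s t : Fin m ⊕ Fin m ⊕ Fin m) (p : Pol m) :
    pderiv s (pderiv t p) = pderiv t (pderiv s p) := by
  induction p using MvPolynomial.induction_on with
  | C a => simp
  | add p q hp hq => simp [hp, hq]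
  | mul_X p n ih =>
      classical
      simp only [pderiv_mul, map_add, ih]
      rw [pderiv_X, pderiv_X]
      simp only [Pi.single_apply]
      split_ifs <;> simp <;> ring

lemma dv_dv (s t : Fin m ⊕ Fin m ⊕ Fin m) :
    ((pderiv s).toLinearMap : Module.End ℂ (Pol m)) * (pderiv t).toLinearMap
      = (pderiv t).toLinearMap * (pderiv s).toLinearMap := by
  refine LinearMap.ext fun p => ?_
  simpa using pderiv_pderiv_comm s t p

lemma dv_mulP (s : Fin m ⊕ Fin m ⊕ Fin m) (q : Pol m) :
    ((pderiv s).toLinearMap : Module.End ℂ (Pol m)) * mulP m q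
      = mulP m q * (pderiv s).toLinearMap + mulP m (pderiv s q) := by
  refine LinearMap.ext fun p => ?_
  simp [mulP, pderiv_mul]
  ring

variable (j k : Fin m)

-- derivative-derivative commutations
lemma dx_dx : dx m j * dx m k = dx m k * dx m j := dv_dv _ _
lemma dx_dy : dx m j * dy m k = dy m k * dx m j := dv_dv _ _
lemma dy_dx : dy m j * dx m k = dx m k * dy m j := dv_dv _ _
lemma dx_dz : dx m j * dz m k = dz m k * dx m j := dv_dv _ _
lemma dz_dx : dz m j * dx m k = dx m k * dz m j := dv_dv _ _
lemma dy_dz : dy m j * dz m k = dz m k * dy m j := dv_dv _ _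
lemma dz_dy : dz m j * dy m k = dy m k * dz m j := dv_dv _ _
lemma dy_dy : dy m j * dy m k = dy m k * dy m j := dv_dv _ _
lemma dz_dz : dz m j * dz m k = dz m k * dz m j := dv_dv _ _

-- derivative past multiplication by a different-type variable
lemma dx_Y : dx m j * mulP m (yV m k) = mulP m (yV m k) * dx m j := by
  rw [dx, yV, dv_mulP, pderiv_X_of_ne (by simp), mulP_zero, add_zero]
lemma dx_Z : dx m j * mulP m (zV m k) = mulP m (zV m k) * dx m j := by
  rw [dx, zV, dv_mulP, pderiv_X_of_ne (by simp), mulP_zero, add_zero]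
lemma dy_X : dy m j * mulP m (xV m k) = mulP m (xV m k) * dy m j := by
  rw [dy, xV, dv_mulP, pderiv_X_of_ne (by simp), mulP_zero, add_zero]
lemma dy_Z : dy m j * mulP m (zV m k) = mulP m (zV m k) * dy m j := by
  rw [dy, zV, dv_mulP, pderiv_X_of_ne (by simp), mulP_zero, add_zero]
lemma dz_X : dz m j * mulP m (xV m k) = mulP m (xV m k) * dz m j := by
  rw [dz, xV, dv_mulP, pderiv_X_of_ne (by simp), mulP_zero, add_zero]
lemma dz_Y : dz m j * mulP m (yV m k) = mulP m (yV m k) * dz m j := by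
  rw [dz, yV, dv_mulP, pderiv_X_of_ne (by simp), mulP_zero, add_zero]

-- derivative past multiplication by the same-type variable
lemma dx_X : dx m j * mulP m (xV m k)
    = mulP m (xV m k) * dx m j + if k = j then 1 else 0 := by
  rw [dx, xV, dv_mulP]
  congr 1
  rcases eq_or_ne k j with h | h
  · subst h; rw [if_pos rfl, pderiv_X_self, mulP_one]
  · rw [if_neg h, pderiv_X_of_ne (by simp [h]), mulP_zero]
lemma dy_Y : dy m j * mulP m (yV m k)
    = mulP m (yV m k) * dy m j + if k = j then 1 else 0 := by
  rw [dy, yV, dv_mulP]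
  congr 1
  rcases eq_or_ne k j with h | h
  · subst h; rw [if_pos rfl, pderiv_X_self, mulP_one]
  · rw [if_neg h, pderiv_X_of_ne (by simp [h]), mulP_zero]
lemma dz_Z : dz m j * mulP m (zV m k)
    = mulP m (zV m k) * dz m j + if k = j then 1 else 0 := by
  rw [dz, zV, dv_mulP]
  congr 1
  rcases eq_or_ne k j with h | h
  · subst h; rw [if_pos rfl, pderiv_X_self, mulP_one]
  · rw [if_neg h, pderiv_X_of_ne (by simp [h]), mulP_zero]

-- derivatives past quadratic multipliers
lemma dz_ZZ : dz m k * mulP m (zV m j * zV m j)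
    = mulP m (zV m j * zV m j) * dz m k
      + (if j = k then mulP m (zV m j) + mulP m (zV m j) else 0) := by
  rw [dz, dv_mulP]
  congr 1
  rcases eq_or_ne j k with h | h
  · subst h
    rw [if_pos rfl, zV, pderiv_mul, pderiv_X_self, one_mul, mul_one, mulP_add]
  · rw [if_neg h, zV, pderiv_mul, pderiv_X_of_ne (by simp [h]), zero_mul, mul_zero,
      add_zero, mulP_zero]
lemma dx_ZZ : dx m k * mulP m (zV m j * zV m j)
    = mulP m (zV m j * zV m j) * dx m k := by
  rw [dx, dv_mulP, zV, pderiv_mul, pderiv_X_of_ne (by simp), zero_mul, mul_zero,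
    add_zero, mulP_zero, add_zero]
lemma dy_ZZ : dy m k * mulP m (zV m j * zV m j)
    = mulP m (zV m j * zV m j) * dy m k := by
  rw [dy, dv_mulP, zV, pderiv_mul, pderiv_X_of_ne (by simp), zero_mul, mul_zero,
    add_zero, mulP_zero, add_zero]
lemma dz_XZ : dz m k * mulP m (xV m j * zV m j)
    = mulP m (xV m j * zV m j) * dz m k + (if j = k then mulP m (xV m j) else 0) := by
  rw [dz, dv_mulP]
  congr 1
  rcases eq_or_ne j k with h | h
  · subst h
    rw [if_pos rfl, xV, zV, pderiv_mul, pderiv_X_of_ne (by simp), pderiv_X_self,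
      zero_mul, mul_one, zero_add]
  · rw [if_neg h, xV, zV, pderiv_mul, pderiv_X_of_ne (by simp),
      pderiv_X_of_ne (by simp [h]), zero_mul, mul_zero, add_zero, mulP_zero]
lemma dx_XZ : dx m k * mulP m (xV m j * zV m j)
    = mulP m (xV m j * zV m j) * dx m k + (if j = k then mulP m (zV m j) else 0) := by
  rw [dx, dv_mulP]
  congr 1
  rcases eq_or_ne j k with h | h
  · subst h
    rw [if_pos rfl, xV, zV, pderiv_mul, pderiv_X_self, pderiv_X_of_ne (by simp),
      one_mul, mul_zero, add_zero]
  · rw [if_neg h, xV, zV, pderiv_mul, pderiv_X_of_ne (by simp [h]),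
      pderiv_X_of_ne (by simp), zero_mul, mul_zero, add_zero, mulP_zero]
lemma dy_XZ : dy m k * mulP m (xV m j * zV m j)
    = mulP m (xV m j * zV m j) * dy m k := by
  rw [dy, dv_mulP, xV, zV, pderiv_mul, pderiv_X_of_ne (by simp),
    pderiv_X_of_ne (by simp), zero_mul, mul_zero, add_zero, mulP_zero, add_zero]

end SDAux

open SDAux

set_option maxHeartbeats 1600000

/-- R and L commute with D_s and D_s†. -/
theorem RL_commute_with_Ds_DsD (m : ℕ) :
    Rop m * Ds m - Ds m * Rop m = 0 ∧
    Lop m * Ds m - Ds m * Lop m = 0 ∧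
    Rop m * DsD m - DsD m * Rop m = 0 ∧
    Lop m * DsD m - DsD m * Lop m = 0 := by
  classical
  -- expansion helpers
  have hexp1 : ∀ (A N B B' : Module.End ℂ (Pol m)) (r : ℂ),
      (A + r•N)*(B - B') - (B - B')*(A + r•N)
        = (A*B - B*A) - (A*B' - B'*A) + r•(N*B - B*N) - r•(N*B' - B'*N) := by
    intro A N B B' r
    simp only [add_mul, mul_add, sub_mul, mul_sub, smul_mul_assoc, mul_smul_comm,
      smul_sub, smul_add]
    module
  have hexp2 : ∀ (A N B B' : Module.End ℂ (Pol m)) (r : ℂ),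
      (A - r•N)*(B - B') - (B - B')*(A - r•N)
        = (A*B - B*A) - (A*B' - B'*A) - r•(N*B - B*N) + r•(N*B' - B'*N) := by
    intro A N B B' r
    simp only [add_mul, mul_add, sub_mul, mul_sub, smul_mul_assoc, mul_smul_comm,
      smul_sub, smul_add]
    module
  have hexp3 : ∀ (A N B B' : Module.End ℂ (Pol m)) (r : ℂ),
      (A + r•N)*(B + B') - (B + B')*(A + r•N)
        = (A*B - B*A) + (A*B' - B'*A) + r•(N*B - B*N) + r•(N*B' - B'*N) := by
    intro A N B B' r
    simp only [add_mul, mul_add, sub_mul, mul_sub, smul_mul_assoc, mul_smul_comm,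
      smul_sub, smul_add]
    module
  have hexp4 : ∀ (A N B B' : Module.End ℂ (Pol m)) (r : ℂ),
      (A - r•N)*(B + B') - (B + B')*(A - r•N)
        = (A*B - B*A) + (A*B' - B'*A) - r•(N*B - B*N) - r•(N*B' - B'*N) := by
    intro A N B B' r
    simp only [add_mul, mul_add, sub_mul, mul_sub, smul_mul_assoc, mul_smul_comm,
      smul_sub, smul_add]
    module
  -- the sixteen pairwise commutators
  have h11 : (∑ j, mulP m (yV m j) * dx m j) * (∑ k, mulP m (zV m k) * dy m k)
      - (∑ k, mulP m (zV m k) * dy m k) * (∑ j, mulP m (yV m j) * dx m j)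
      = -(∑ j, mulP m (zV m j) * dx m j) := by
    rw [sum_comm_sub]
    have key : ∀ j k : Fin m,
        (mulP m (yV m j) * dx m j) * (mulP m (zV m k) * dy m k)
          - (mulP m (zV m k) * dy m k) * (mulP m (yV m j) * dx m j)
        = -(if j = k then mulP m (zV m k) * dx m j else 0) := by
      intro j k
      rw [g1 (h1 := dx_Z j k) (h2 := dx_dy j k) (h3 := mulP_comm _ _) (h4 := dy_Y k j)]
      split_ifs <;> simp
    simp only [key]
    simp only [Finset.sum_neg_distrib, Finset.sum_ite_eq, Finset.mem_univ, if_true]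
  have h12 : (∑ j, mulP m (yV m j) * dx m j) * (∑ k, dx m k * dz m k)
      - (∑ k, dx m k * dz m k) * (∑ j, mulP m (yV m j) * dx m j) = 0 := by
    rw [sum_comm_sub]
    have key : ∀ j k : Fin m,
        (mulP m (yV m j) * dx m j) * (dx m k * dz m k)
          - (dx m k * dz m k) * (mulP m (yV m j) * dx m j) = 0 := by
      intro j k
      rw [g1 (h1 := dx_dx j k) (h2 := dx_dz j k) (h3 := (dx_Y k j).symm)
        (h4 := by rw [add_zero]; exact dz_Y k j)]
      simp
    simp only [key, Finset.sum_const_zero]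
  have h21 : (∑ j, mulP m (zV m j * zV m j)) * (∑ k, mulP m (zV m k) * dy m k)
      - (∑ k, mulP m (zV m k) * dy m k) * (∑ j, mulP m (zV m j * zV m j)) = 0 := by
    rw [sum_comm_sub]
    have key : ∀ j k : Fin m,
        mulP m (zV m j * zV m j) * (mulP m (zV m k) * dy m k)
          - (mulP m (zV m k) * dy m k) * mulP m (zV m j * zV m j) = 0 := by
      intro j k
      rw [g2 (h1 := mulP_comm _ _) (h2 := by rw [add_zero]; exact dy_ZZ j k)]
      simp
    simp only [key, Finset.sum_const_zero]
  have h22 : (∑ j, mulP m (zV m j * zV m j)) * (∑ k, dx m k * dz m k)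
      - (∑ k, dx m k * dz m k) * (∑ j, mulP m (zV m j * zV m j))
      = -((∑ j, mulP m (zV m j) * dx m j) + (∑ j, mulP m (zV m j) * dx m j)) := by
    rw [sum_comm_sub]
    have key : ∀ j k : Fin m,
        mulP m (zV m j * zV m j) * (dx m k * dz m k)
          - (dx m k * dz m k) * mulP m (zV m j * zV m j)
        = -(if j = k then mulP m (zV m j) * dx m j + mulP m (zV m j) * dx m j
            else 0) := by
      intro j k
      rw [g2 (h1 := dx_ZZ j k) (h2 := dz_ZZ j k)]
      split_ifs with h
      · subst h; rw [mul_add, dx_Z]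
      · simp
    simp only [key]
    simp only [Finset.sum_neg_distrib, Finset.sum_ite_eq, Finset.mem_univ, if_true, Finset.sum_add_distrib]
  have h31 : (∑ j, mulP m (xV m j) * dy m j) * (∑ k, mulP m (zV m k) * dy m k)
      - (∑ k, mulP m (zV m k) * dy m k) * (∑ j, mulP m (xV m j) * dy m j) = 0 := by
    rw [sum_comm_sub]
    have key : ∀ j k : Fin m,
        (mulP m (xV m j) * dy m j) * (mulP m (zV m k) * dy m k)
          - (mulP m (zV m k) * dy m k) * (mulP m (xV m j) * dy m j) = 0 := by
      intro j k
      rw [g1 (h1 := dy_Z j k) (h2 := dy_dy j k) (h3 := mulP_comm _ _)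
        (h4 := by rw [add_zero]; exact dy_X k j)]
      simp
    simp only [key, Finset.sum_const_zero]
  have h32 : (∑ j, mulP m (xV m j) * dy m j) * (∑ k, dx m k * dz m k)
      - (∑ k, dx m k * dz m k) * (∑ j, mulP m (xV m j) * dy m j)
      = -(∑ j, dz m j * dy m j) := by
    rw [sum_comm_sub]
    have key : ∀ j k : Fin m,
        (mulP m (xV m j) * dy m j) * (dx m k * dz m k)
          - (dx m k * dz m k) * (mulP m (xV m j) * dy m j)
        = -(if j = k then dz m k * dy m j else 0) := by
      intro j k
      rw [g3 (h1 := dy_dx j k) (h2 := dy_dz j k) (h3 := dz_X k j) (h4 := dx_X k j)]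
      split_ifs <;> simp
    simp only [key]
    simp only [Finset.sum_neg_distrib, Finset.sum_ite_eq, Finset.mem_univ, if_true]
  have h41 : (∑ j, dz m j * dz m j) * (∑ k, mulP m (zV m k) * dy m k)
      - (∑ k, mulP m (zV m k) * dy m k) * (∑ j, dz m j * dz m j)
      = (∑ j, dz m j * dy m j) + (∑ j, dz m j * dy m j) := by
    rw [sum_comm_sub]
    have key : ∀ j k : Fin m,
        (dz m j * dz m j) * (mulP m (zV m k) * dy m k)
          - (mulP m (zV m k) * dy m k) * (dz m j * dz m j)
        = (if k = j then dz m j * dy m k + dz m j * dy m k else 0) := by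
      intro j k
      rw [g4 (h1 := dz_dy j k) (h2 := dz_Z j k) (h3 := by split_ifs <;> simp)]
      split_ifs <;> simp
    simp only [key]
    simp only [Finset.sum_ite_eq', Finset.mem_univ, if_true, Finset.sum_add_distrib]
  have h42 : (∑ j, dz m j * dz m j) * (∑ k, dx m k * dz m k)
      - (∑ k, dx m k * dz m k) * (∑ j, dz m j * dz m j) = 0 := by
    rw [sum_comm_sub]
    have key : ∀ j k : Fin m,
        (dz m j * dz m j) * (dx m k * dz m k)
          - (dx m k * dz m k) * (dz m j * dz m j) = 0 := by
      intro j k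
      rw [g1 (h1 := dz_dx j k) (h2 := dz_dz j k) (h3 := dz_dx j k)
        (h4 := by rw [add_zero]; exact dz_dz k j)]
      simp
    simp only [key, Finset.sum_const_zero]
  have h51 : (∑ j, mulP m (yV m j) * dx m j) * (∑ k, mulP m (yV m k) * dz m k)
      - (∑ k, mulP m (yV m k) * dz m k) * (∑ j, mulP m (yV m j) * dx m j) = 0 := by
    rw [sum_comm_sub]
    have key : ∀ j k : Fin m,
        (mulP m (yV m j) * dx m j) * (mulP m (yV m k) * dz m k)
          - (mulP m (yV m k) * dz m k) * (mulP m (yV m j) * dx m j) = 0 := by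
      intro j k
      rw [g1 (h1 := dx_Y j k) (h2 := dx_dz j k) (h3 := mulP_comm _ _)
        (h4 := by rw [add_zero]; exact dz_Y k j)]
      simp
    simp only [key, Finset.sum_const_zero]
  have h52 : (∑ j, mulP m (yV m j) * dx m j) * (∑ k, mulP m (xV m k * zV m k))
      - (∑ k, mulP m (xV m k * zV m k)) * (∑ j, mulP m (yV m j) * dx m j)
      = ∑ j, mulP m (yV m j) * mulP m (zV m j) := by
    rw [sum_comm_sub]
    have key : ∀ j k : Fin m,
        (mulP m (yV m j) * dx m j) * mulP m (xV m k * zV m k)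
          - mulP m (xV m k * zV m k) * (mulP m (yV m j) * dx m j)
        = (if k = j then mulP m (yV m j) * mulP m (zV m k) else 0) := by
      intro j k
      rw [g5 (h1 := mulP_comm _ _) (h2 := dx_XZ k j)]
      split_ifs <;> simp
    simp only [key]
    simp only [Finset.sum_ite_eq', Finset.mem_univ, if_true]
  have h61 : (∑ j, mulP m (zV m j * zV m j)) * (∑ k, mulP m (yV m k) * dz m k)
      - (∑ k, mulP m (yV m k) * dz m k) * (∑ j, mulP m (zV m j * zV m j))
      = -((∑ j, mulP m (yV m j) * mulP m (zV m j))
          + (∑ j, mulP m (yV m j) * mulP m (zV m j))) := by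
    rw [sum_comm_sub]
    have key : ∀ j k : Fin m,
        mulP m (zV m j * zV m j) * (mulP m (yV m k) * dz m k)
          - (mulP m (yV m k) * dz m k) * mulP m (zV m j * zV m j)
        = -(if j = k then mulP m (yV m k) * mulP m (zV m j)
              + mulP m (yV m k) * mulP m (zV m j) else 0) := by
      intro j k
      rw [g2 (h1 := mulP_comm _ _) (h2 := dz_ZZ j k)]
      split_ifs with h
      · rw [mul_add]
      · simp
    simp only [key]
    simp only [Finset.sum_neg_distrib, Finset.sum_ite_eq, Finset.mem_univ, if_true, Finset.sum_add_distrib]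
  have h62 : (∑ j, mulP m (zV m j * zV m j)) * (∑ k, mulP m (xV m k * zV m k))
      - (∑ k, mulP m (xV m k * zV m k)) * (∑ j, mulP m (zV m j * zV m j)) = 0 := by
    rw [sum_comm_sub]
    have key : ∀ j k : Fin m,
        mulP m (zV m j * zV m j) * mulP m (xV m k * zV m k)
          - mulP m (xV m k * zV m k) * mulP m (zV m j * zV m j) = 0 := by
      intro j k
      rw [mulP_comm, sub_self]
    simp only [key, Finset.sum_const_zero]
  have h71 : (∑ j, mulP m (xV m j) * dy m j) * (∑ k, mulP m (yV m k) * dz m k)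
      - (∑ k, mulP m (yV m k) * dz m k) * (∑ j, mulP m (xV m j) * dy m j)
      = ∑ j, mulP m (xV m j) * dz m j := by
    rw [sum_comm_sub]
    have key : ∀ j k : Fin m,
        (mulP m (xV m j) * dy m j) * (mulP m (yV m k) * dz m k)
          - (mulP m (yV m k) * dz m k) * (mulP m (xV m j) * dy m j)
        = (if k = j then mulP m (xV m j) * dz m k else 0) := by
      intro j k
      rw [g6 (h1 := mulP_comm _ _) (h2 := (dz_X k j).symm) (h3 := dy_dz j k)
        (h4 := dy_Y j k)]
      split_ifs <;> simp
    simp only [key]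
    simp only [Finset.sum_ite_eq', Finset.mem_univ, if_true]
  have h72 : (∑ j, mulP m (xV m j) * dy m j) * (∑ k, mulP m (xV m k * zV m k))
      - (∑ k, mulP m (xV m k * zV m k)) * (∑ j, mulP m (xV m j) * dy m j) = 0 := by
    rw [sum_comm_sub]
    have key : ∀ j k : Fin m,
        (mulP m (xV m j) * dy m j) * mulP m (xV m k * zV m k)
          - mulP m (xV m k * zV m k) * (mulP m (xV m j) * dy m j) = 0 := by
      intro j k
      rw [g5 (h1 := mulP_comm _ _) (h2 := by rw [add_zero]; exact dy_XZ k j)]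
      simp
    simp only [key, Finset.sum_const_zero]
  have h81 : (∑ j, dz m j * dz m j) * (∑ k, mulP m (yV m k) * dz m k)
      - (∑ k, mulP m (yV m k) * dz m k) * (∑ j, dz m j * dz m j) = 0 := by
    rw [sum_comm_sub]
    have key : ∀ j k : Fin m,
        (dz m j * dz m j) * (mulP m (yV m k) * dz m k)
          - (mulP m (yV m k) * dz m k) * (dz m j * dz m j) = 0 := by
      intro j k
      rw [g1 (h1 := dz_Y j k) (h2 := dz_dz j k) (h3 := dz_Y j k)
        (h4 := by rw [add_zero]; exact dz_dz k j)]
      simp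
    simp only [key, Finset.sum_const_zero]
  have h82 : (∑ j, dz m j * dz m j) * (∑ k, mulP m (xV m k * zV m k))
      - (∑ k, mulP m (xV m k * zV m k)) * (∑ j, dz m j * dz m j)
      = (∑ j, mulP m (xV m j) * dz m j) + (∑ j, mulP m (xV m j) * dz m j) := by
    rw [sum_comm_sub]
    have key : ∀ j k : Fin m,
        (dz m j * dz m j) * mulP m (xV m k * zV m k)
          - mulP m (xV m k * zV m k) * (dz m j * dz m j)
        = (if k = j then mulP m (xV m k) * dz m j + mulP m (xV m k) * dz m j
            else 0) := by
      intro j k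
      rw [g7 (h2 := dz_XZ k j) (h3 := by split_ifs <;> simp [dz_X])]
      split_ifs <;> simp
    simp only [key]
    simp only [Finset.sum_ite_eq', Finset.mem_univ, if_true, Finset.sum_add_distrib]
  refine ⟨?_, ?_, ?_, ?_⟩
  · simp only [Rop, Ds, nzsq]
    rw [hexp1, h11, h12, h21, h22]
    module
  · simp only [Lop, Ds, lapZ]
    rw [hexp2, h31, h32, h41, h42]
    module
  · simp only [Rop, DsD, nzsq]
    rw [hexp3, h51, h52, h61, h62]
    module
  · simp only [Lop, DsD, lapZ]
    rw [hexp4, h71, h72, h81, h82]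
    module
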